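/- arXiv:1105.3164 — 2 statements merged into one kernel-verified Lean document; each statement's English description precedes it below -/
import Mathlib

section
/- Let S_x, S_y be symmetric positive definite matrices of sizes N_x × N_x and N_y × N_y with positive definite square roots S_x^{1/2}, S_y^{1/2}, let ε > 0, let L be a constant real N_x × N_y matrix, and let f : ℝ^{N_x} → ℝ^{N_x} and g : ℝ^{N_y} → ℝ^{N_y} satisfy x^T S_x f(x) = 0 for all x and y^T S_y g(y) = 0 for all y. If x : ℝ → ℝ^{N_x} and y : ℝ → ℝ^{N_y} are differentiable and satisfy dx/dt = f(x) + S_x^{-1/2} L S_y^{1/2} y and dy/dt = (1/ε)[ g(y) − S_y^{-1/2} L^T S_x^{1/2} x ] for all t, then the total energy E(t) = (1/2) x(t)^T S_x x(t) + (ε/2) y(t)^T S_y y(t) is constant in t. -/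
/-!
With `S_x = R²`, `S_y = Q²` and `R`, `Q` symmetric, the energy rate of each subsystem is its own
conservative part (zero) plus its share of the coupling, and the two shares are
`(R x) ⬝ᵥ L (Q y)` and `ε · (1/ε) · (-(Q y) ⬝ᵥ Lᵀ (R x))`, which cancel.
-/

open Matrix

section Calculus

variable {𝕜 : Type*} [NontriviallyNormedField 𝕜] {m n : Type*} [Fintype n]
  {u v : 𝕜 → n → 𝕜} {u' v' : n → 𝕜} {t : 𝕜}

theorem HasDerivAt.dotProduct (hu : HasDerivAt u u' t) (hv : HasDerivAt v v' t) :
    HasDerivAt (fun s => u s ⬝ᵥ v s) (u' ⬝ᵥ v t + u t ⬝ᵥ v') t := by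
  have hcoord : ∀ i, HasDerivAt (fun s => u s i * v s i) (u' i * v t i + u t i * v' i) t :=
    fun i => (hasDerivAt_pi.mp hu i).mul (hasDerivAt_pi.mp hv i)
  have hsum := HasDerivAt.fun_sum (u := Finset.univ) fun i _ => hcoord i
  rw [Finset.sum_add_distrib] at hsum
  exact hsum

theorem HasDerivAt.mulVec (M : Matrix m n 𝕜) (hv : HasDerivAt v v' t) :
    HasDerivAt (fun s => M *ᵥ v s) (M *ᵥ v') t :=
  hasDerivAt_pi.mpr fun i =>
    HasDerivAt.fun_sum (u := Finset.univ) fun j _ => (hasDerivAt_pi.mp hv j).const_mul (M i j)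

theorem HasDerivAt.dotProduct_mulVec_self {S : Matrix n n 𝕜} (hS : S.IsSymm)
    (hu : HasDerivAt u u' t) :
    HasDerivAt (fun s => u s ⬝ᵥ S *ᵥ u s) (2 * (u t ⬝ᵥ S *ᵥ u')) t := by
  convert hu.dotProduct (hu.mulVec S) using 1
  rw [dotProduct_comm, dotProduct_mulVec, ← mulVec_transpose, hS.eq, two_mul]

end Calculus

theorem Matrix.IsSymm.mul_self {α n : Type*} [Fintype n] [CommSemiring α] {R : Matrix n n α}
    (hR : R.IsSymm) : (R * R).IsSymm := by
  simpa only [hR.eq] using isSymm_mul_transpose_self R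

theorem dotProduct_mul_self_mulVec_inv_mul {α : Type*} [CommRing α] {m n : Type*}
    [Fintype m] [DecidableEq m] [Fintype n] {R : Matrix m m α} (hR : R.IsSymm)
    (hdet : IsUnit R.det) (M : Matrix m n α) (x : m → α) (z : n → α) :
    x ⬝ᵥ (R * R) *ᵥ (R⁻¹ * M) *ᵥ z = (R *ᵥ x) ⬝ᵥ M *ᵥ z := by
  rw [mulVec_mulVec, Matrix.mul_assoc, mul_nonsing_inv_cancel_left R M hdet, ← mulVec_mulVec,
    dotProduct_mulVec, ← mulVec_transpose, hR.eq]

theorem total_energy_conservation_two_scale_general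
    (Nx Ny : ℕ) (ε : ℝ) (hε : 0 < ε)
    (Sx sqrtSx : Matrix (Fin Nx) (Fin Nx) ℝ)
    (Sy sqrtSy : Matrix (Fin Ny) (Fin Ny) ℝ)
    (hsqrtSx : sqrtSx.PosDef) (hsqrtSy : sqrtSy.PosDef)
    (hsqx : sqrtSx * sqrtSx = Sx) (hsqy : sqrtSy * sqrtSy = Sy)
    (L : Matrix (Fin Nx) (Fin Ny) ℝ)
    (f : (Fin Nx → ℝ) → (Fin Nx → ℝ)) (g : (Fin Ny → ℝ) → (Fin Ny → ℝ))
    (hf : ∀ v, v ⬝ᵥ Sx.mulVec (f v) = 0) (hg : ∀ v, v ⬝ᵥ Sy.mulVec (g v) = 0)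
    (x : ℝ → Fin Nx → ℝ) (y : ℝ → Fin Ny → ℝ)
    (hx : ∀ t : ℝ, HasDerivAt x (f (x t) + (sqrtSx⁻¹ * L * sqrtSy).mulVec (y t)) t)
    (hy : ∀ t : ℝ, HasDerivAt y
      ((1 / ε) • (g (y t) - (sqrtSy⁻¹ * Lᵀ * sqrtSx).mulVec (x t))) t) :
    ∀ t : ℝ,
      (1 / 2) * (x t ⬝ᵥ Sx.mulVec (x t)) + (ε / 2) * (y t ⬝ᵥ Sy.mulVec (y t)) =
        (1 / 2) * (x 0 ⬝ᵥ Sx.mulVec (x 0)) + (ε / 2) * (y 0 ⬝ᵥ Sy.mulVec (y 0)) := by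
  subst hsqx hsqy
  have hRx : sqrtSx.IsSymm := hsqrtSx.isHermitian
  have hRy : sqrtSy.IsSymm := hsqrtSy.isHermitian
  have hx_power : ∀ t, x t ⬝ᵥ (sqrtSx * sqrtSx) *ᵥ (f (x t) + (sqrtSx⁻¹ * L * sqrtSy) *ᵥ y t) =
      (sqrtSx *ᵥ x t) ⬝ᵥ L *ᵥ (sqrtSy *ᵥ y t) := fun t => by
    rw [mulVec_add, dotProduct_add, hf, zero_add, Matrix.mul_assoc,
      dotProduct_mul_self_mulVec_inv_mul hRx hsqrtSx.det_pos.ne'.isUnit, mulVec_mulVec]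
  have hy_power : ∀ t, y t ⬝ᵥ (sqrtSy * sqrtSy) *ᵥ
      ((1 / ε) • (g (y t) - (sqrtSy⁻¹ * Lᵀ * sqrtSx) *ᵥ x t)) =
      -(1 / ε) * ((sqrtSx *ᵥ x t) ⬝ᵥ L *ᵥ (sqrtSy *ᵥ y t)) := fun t => by
    rw [mulVec_smul, dotProduct_smul, mulVec_sub, dotProduct_sub, hg, zero_sub, Matrix.mul_assoc,
      dotProduct_mul_self_mulVec_inv_mul hRy hsqrtSy.det_pos.ne'.isUnit, ← mulVec_mulVec,
      dotProduct_transpose_mulVec, smul_eq_mul, mul_neg, neg_mul]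
  have hderiv : ∀ t, HasDerivAt (fun s => (1 / 2) * (x s ⬝ᵥ (sqrtSx * sqrtSx) *ᵥ x s) +
      (ε / 2) * (y s ⬝ᵥ (sqrtSy * sqrtSy) *ᵥ y s)) 0 t := fun t => by
    refine ((((hx t).dotProduct_mulVec_self hRx.mul_self).const_mul (1 / 2)).add
      (((hy t).dotProduct_mulVec_self hRy.mul_self).const_mul (ε / 2))).congr_deriv ?_
    rw [hx_power, hy_power]
    field_simp
    ring
  exact fun t => is_const_of_deriv_eq_zero (fun s => (hderiv s).differentiableAt)
    (fun s => (hderiv s).deriv) t 0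

/-- for the two-scale system with linear energy-preserving coupling
`dx/dt = f(x) + S_x^{-1/2} L S_y^{1/2} y`, `dy/dt = (1/ε)[g(y) − S_y^{-1/2} L^T S_x^{1/2} x]`,
where `f` and `g` conserve their respective energies, the total energy
`E(t) = (1/2) x^T S_x x + (ε/2) y^T S_y y` is constant in time. -/
theorem total_energy_conservation_two_scale
    (Nx Ny : ℕ) (ε : ℝ) (hε : 0 < ε)
    (Sx sqrtSx : Matrix (Fin Nx) (Fin Nx) ℝ)
    (Sy sqrtSy : Matrix (Fin Ny) (Fin Ny) ℝ)
    (hSx : Sx.PosDef) (hSy : Sy.PosDef)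
    (hsqrtSx : sqrtSx.PosDef) (hsqrtSy : sqrtSy.PosDef)
    (hsqx : sqrtSx * sqrtSx = Sx) (hsqy : sqrtSy * sqrtSy = Sy)
    (L : Matrix (Fin Nx) (Fin Ny) ℝ)
    (f : (Fin Nx → ℝ) → (Fin Nx → ℝ)) (g : (Fin Ny → ℝ) → (Fin Ny → ℝ))
    (hf : ∀ v, v ⬝ᵥ Sx.mulVec (f v) = 0) (hg : ∀ v, v ⬝ᵥ Sy.mulVec (g v) = 0)
    (x : ℝ → Fin Nx → ℝ) (y : ℝ → Fin Ny → ℝ)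
    (hx : ∀ t : ℝ, HasDerivAt x (f (x t) + (sqrtSx⁻¹ * L * sqrtSy).mulVec (y t)) t)
    (hy : ∀ t : ℝ, HasDerivAt y
      ((1 / ε) • (g (y t) - (sqrtSy⁻¹ * Lᵀ * sqrtSx).mulVec (x t))) t) :
    ∀ t : ℝ,
      (1 / 2) * (x t ⬝ᵥ Sx.mulVec (x t)) + (ε / 2) * (y t ⬝ᵥ Sy.mulVec (y t)) =
        (1 / 2) * (x 0 ⬝ᵥ Sx.mulVec (x 0)) + (ε / 2) * (y 0 ⬝ᵥ Sy.mulVec (y 0)) :=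
  total_energy_conservation_two_scale_general Nx Ny ε hε Sx sqrtSx Sy sqrtSy hsqrtSx hsqrtSy hsqx
    hsqy L f g hf hg x y hx hy
end

section
/- Let N, J be positive integers and λ_x, λ_y, ε > 0. Let x : ℝ → (ℤ → ℝ) and y : ℝ → (ℤ → ℝ) be differentiable in t, periodic in the sense that x(t)_{i+N} = x(t)_i and y(t)_{k+NJ} = y(t)_k for all integers i, k and all t, and satisfy the unforced undamped two-scale Lorenz equations dx_i/dt = x_{i−1}(x_{i+1} − x_{i−2}) − (λ_y/J) ∑_{j=0}^{J−1} y_{iJ+j} and dy_k/dt = (1/ε)[ y_{k+1}(y_{k−1} − y_{k+2}) + λ_x x_{⌊k/J⌋} ] for all integers i, k and all t. Then the total energy E(t) = (λ_x/2) ∑_{i=0}^{N−1} x(t)_i² + (ε λ_y/(2J)) ∑_{k=0}^{NJ−1} y(t)_k² is constant in t. -/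
open Finset Function

/-!
Differentiating the energy along a solution gives `λ_x ∑ x_i ẋ_i + (ε λ_y / J) ∑ y_k ẏ_k`.
Within each scale the quadratic advection terms telescope over one period, since
`x_i x_{i-1} (x_{i+1} - x_{i-2}) = g(i+1) - g(i)` with `g(i) = x_{i-2} x_{i-1} x_i`, and likewise for
the reversed fast chain. What remains are the two exchange terms
`∓ (λ_x λ_y / J) ∑_i x_i ∑_j y_{iJ+j}`, which cancel because the fast index `k = iJ + j` runs over
the block of `x_i` exactly when `⌊k/J⌋ = i`.
-/

lemma Function.Periodic.sum_range_sub_eq_zero {G : Type*} [AddCommGroup G] {g : ℤ → G} {n : ℕ}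
    (hg : Periodic g n) : ∑ i ∈ range n, (g (i + 1) - g i) = 0 := by
  have h0 : g n = g 0 := by simpa using hg 0
  simpa [h0] using sum_range_sub (fun i : ℕ ↦ g i) n

lemma sum_mul_lorenz96_advection_eq_zero {R : Type*} [CommRing R] {x : ℤ → R} {n : ℕ}
    (hx : Periodic x n) : ∑ i ∈ range n, x i * (x (i - 1) * (x (i + 1) - x (i - 2))) = 0 := by
  rw [← ((hx.sub_const 2).mul (hx.sub_const 1)).mul hx |>.sum_range_sub_eq_zero]
  exact sum_congr rfl fun i _ ↦ by simp only [Pi.mul_apply]; ring_nf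

lemma sum_mul_reversed_lorenz96_advection_eq_zero {R : Type*} [CommRing R] {y : ℤ → R} {n : ℕ}
    (hy : Periodic y n) : ∑ k ∈ range n, y k * (y (k + 1) * (y (k - 1) - y (k + 2))) = 0 := by
  rw [← neg_eq_zero, ← sum_neg_distrib,
    ← ((hy.sub_const 1).mul hy).mul (hy.add_const 1) |>.sum_range_sub_eq_zero]
  exact sum_congr rfl fun k _ ↦ by simp only [Pi.mul_apply]; ring_nf

lemma sum_range_mul_eq_sum_sum {M : Type*} [AddCommMonoid M] (f : ℕ → M) (m n : ℕ) :
    ∑ k ∈ range (m * n), f k = ∑ i ∈ range m, ∑ j ∈ range n, f (i * n + j) := by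
  induction m with
  | zero => simp
  | succ m ih => rw [Nat.succ_mul, sum_range_add, ih, sum_range_succ]

lemma Int.fdiv_mul_add_of_lt {i j J : ℕ} (hj : j < J) : ((i : ℤ) * J + j).fdiv J = i := by
  rw [Int.fdiv_eq_ediv_of_nonneg _ J.cast_nonneg, add_comm, Int.add_mul_ediv_right _ _ (by omega),
    Int.ediv_eq_zero_of_lt j.cast_nonneg (by omega), zero_add]

lemma sum_mul_comp_fdiv_eq_sum_mul_sum {R : Type*} [CommSemiring R] (x y : ℤ → R) (N J : ℕ) :
    ∑ k ∈ range (N * J), y k * x (Int.fdiv k J)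
      = ∑ i ∈ range N, x i * ∑ j ∈ range J, y (i * J + j) := by
  rw [sum_range_mul_eq_sum_sum (fun k ↦ y k * x (Int.fdiv k J))]
  refine sum_congr rfl fun i _ ↦ ?_
  rw [mul_sum]
  refine sum_congr rfl fun j hj ↦ ?_
  push_cast
  rw [Int.fdiv_mul_add_of_lt (mem_range.mp hj), mul_comm]

theorem two_scale_lorenz_energy_rate_eq_zero {N J : ℕ} {lamx lamy ε : ℝ} (hε : ε ≠ 0)
    {x y : ℤ → ℝ} (hx : Periodic x N) (hy : Periodic y (N * J : ℕ)) :
    lamx * ∑ i ∈ range N, x i * (x (i - 1) * (x (i + 1) - x (i - 2))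
        - (lamy / J) * ∑ j ∈ range J, y (i * J + j))
      + ε * lamy / J * ∑ k ∈ range (N * J), y k * ((1 / ε) * (y (k + 1) * (y (k - 1) - y (k + 2))
        + lamx * x (Int.fdiv k J))) = 0 := by
  have slow : ∑ i ∈ range N, x i * (x (i - 1) * (x (i + 1) - x (i - 2))
        - (lamy / J) * ∑ j ∈ range J, y (i * J + j))
      = ∑ i ∈ range N, x i * (x (i - 1) * (x (i + 1) - x (i - 2)))
        - lamy / J * ∑ i ∈ range N, x i * ∑ j ∈ range J, y (i * J + j) := by
    rw [mul_sum, ← sum_sub_distrib]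
    exact sum_congr rfl fun i _ ↦ by ring
  have fast : ∑ k ∈ range (N * J), y k * ((1 / ε) * (y (k + 1) * (y (k - 1) - y (k + 2))
        + lamx * x (Int.fdiv k J)))
      = 1 / ε * ∑ k ∈ range (N * J), y k * (y (k + 1) * (y (k - 1) - y (k + 2)))
        + lamx / ε * ∑ k ∈ range (N * J), y k * x (Int.fdiv k J) := by
    rw [mul_sum, mul_sum, ← sum_add_distrib]
    exact sum_congr rfl fun k _ ↦ by ring
  rw [slow, fast, sum_mul_lorenz96_advection_eq_zero hx,
    sum_mul_reversed_lorenz96_advection_eq_zero hy, sum_mul_comp_fdiv_eq_sum_mul_sum]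
  field_simp
  ring

lemma hasDerivAt_sum_sq {𝕜 ι : Type*} [NontriviallyNormedField 𝕜] {s : Finset ι} {f : 𝕜 → ι → 𝕜}
    {f' : ι → 𝕜} {t : 𝕜} (hf : ∀ i ∈ s, HasDerivAt (fun t ↦ f t i) (f' i) t) :
    HasDerivAt (fun t ↦ ∑ i ∈ s, f t i ^ 2) (2 * ∑ i ∈ s, f t i * f' i) t := by
  rw [mul_sum]
  exact HasDerivAt.fun_sum fun i hi ↦ by simpa [mul_assoc] using (hf i hi).fun_pow 2

theorem two_scale_lorenz_total_energy_conservation_general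
    (N J : ℕ)
    (lamx lamy ε : ℝ) (hε : 0 < ε)
    (x y : ℝ → ℤ → ℝ)
    (hxper : ∀ (t : ℝ) (i : ℤ), x t (i + N) = x t i)
    (hyper : ∀ (t : ℝ) (k : ℤ), y t (k + N * J) = y t k)
    (hx : ∀ (i : ℤ) (t : ℝ), HasDerivAt (fun t => x t i)
      (x t (i - 1) * (x t (i + 1) - x t (i - 2))
        - (lamy / J) * ∑ j ∈ Finset.range J, y t (i * J + j)) t)
    (hy : ∀ (k : ℤ) (t : ℝ), HasDerivAt (fun t => y t k)
      ((1 / ε) * (y t (k + 1) * (y t (k - 1) - y t (k + 2))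
        + lamx * x t (Int.fdiv k J))) t) :
    ∀ t : ℝ,
      (lamx / 2) * (∑ i ∈ Finset.range N, x t i ^ 2)
        + (ε * lamy / (2 * J)) * (∑ k ∈ Finset.range (N * J), y t k ^ 2) =
      (lamx / 2) * (∑ i ∈ Finset.range N, x 0 i ^ 2)
        + (ε * lamy / (2 * J)) * (∑ k ∈ Finset.range (N * J), y 0 k ^ 2) := by
  have energy_deriv : ∀ t, HasDerivAt (fun t ↦ (lamx / 2) * (∑ i ∈ range N, x t i ^ 2)
      + (ε * lamy / (2 * J)) * (∑ k ∈ range (N * J), y t k ^ 2)) 0 t := by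
    intro t
    have hrate := two_scale_lorenz_energy_rate_eq_zero (lamx := lamx) (lamy := lamy) hε.ne'
      (hxper t) (fun k ↦ by push_cast; exact hyper t k)
    have hxsq := hasDerivAt_sum_sq (s := range N) (f := fun t (i : ℕ) ↦ x t i) fun i _ ↦ hx i t
    have hysq := hasDerivAt_sum_sq (s := range (N * J)) (f := fun t (k : ℕ) ↦ y t k)
      fun k _ ↦ hy k t
    refine ((hxsq.const_mul (lamx / 2)).fun_add
      (hysq.const_mul (ε * lamy / (2 * J)))).congr_deriv ?_
    linear_combination hrate
  exact fun t ↦ is_const_of_deriv_eq_zero (fun s ↦ (energy_deriv s).differentiableAt)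
    (fun s ↦ (energy_deriv s).deriv) t 0

/-- the unforced undamped two-scale Lorenz model conserves the total energy
`E = (λ_x/2) ∑_{i<N} x_i² + (ε λ_y/(2J)) ∑_{k<NJ} y_k²`. -/
theorem two_scale_lorenz_total_energy_conservation
    (N J : ℕ) (hN : 0 < N) (hJ : 0 < J)
    (lamx lamy ε : ℝ) (hlamx : 0 < lamx) (hlamy : 0 < lamy) (hε : 0 < ε)
    (x y : ℝ → ℤ → ℝ)
    (hxper : ∀ (t : ℝ) (i : ℤ), x t (i + N) = x t i)
    (hyper : ∀ (t : ℝ) (k : ℤ), y t (k + N * J) = y t k)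
    (hx : ∀ (i : ℤ) (t : ℝ), HasDerivAt (fun t => x t i)
      (x t (i - 1) * (x t (i + 1) - x t (i - 2))
        - (lamy / J) * ∑ j ∈ Finset.range J, y t (i * J + j)) t)
    (hy : ∀ (k : ℤ) (t : ℝ), HasDerivAt (fun t => y t k)
      ((1 / ε) * (y t (k + 1) * (y t (k - 1) - y t (k + 2))
        + lamx * x t (Int.fdiv k J))) t) :
    ∀ t : ℝ,
      (lamx / 2) * (∑ i ∈ Finset.range N, x t i ^ 2)
        + (ε * lamy / (2 * J)) * (∑ k ∈ Finset.range (N * J), y t k ^ 2) =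
      (lamx / 2) * (∑ i ∈ Finset.range N, x 0 i ^ 2)
        + (ε * lamy / (2 * J)) * (∑ k ∈ Finset.range (N * J), y 0 k ^ 2) :=
  two_scale_lorenz_total_energy_conservation_general N J lamx lamy ε hε x y hxper hyper hx hy
end
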